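/- Assume σ∨ is pointed. Then ML*_h(K[P]) = K if and only if K[P] is isomorphic as a K-algebra to the polynomial ring K[x₁, …, x_n] (equivalently, the affine toric variety X = Spec K[P] is the affine space 𝔸^n, i.e. P ≅ ℕ^n). -/

import Mathlib

set_option synthInstance.maxHeartbeats 1000000
set_option maxHeartbeats 1000000

noncomputable section

namespace ToricML

open Finsupp

/-- The Laurent polynomial algebra `K[M]`, where `M = ℤⁿ`. -/
abbrev Laurent (K : Type) [Field K] (n : ℕ) := AddMonoidAlgebra K (Fin n → ℤ)

/-- The character `χ^m` in `K[M]`. -/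
def chi (K : Type) [Field K] (n : ℕ) (m : Fin n → ℤ) : Laurent K n := AddMonoidAlgebra.single m 1

/-- The monoid algebra `K[P] = ⊕_{m ∈ P} K·χ^m` as a subalgebra of `K[M]`. -/
def monAlg (K : Type) [Field K] (n : ℕ) (P : AddSubmonoid (Fin n → ℤ)) :
    Subalgebra K (Laurent K n) where
  carrier := {f | ∀ m ∈ f.coeff.support, m ∈ P}
  mul_mem' := by
    classical
    intro a b ha hb m hm
    have h := AddMonoidAlgebra.support_coeff_mul_subset a b hm
    rw [Finset.mem_add] at h
    obtain ⟨x, hx, y, hy, rfl⟩ := h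
    exact P.add_mem (ha _ hx) (hb _ hy)
  add_mem' := by
    intro a b ha hb m hm
    rcases Finset.mem_union.mp (Finsupp.support_add hm) with h | h
    · exact ha _ h
    · exact hb _ h
  algebraMap_mem' := by
    intro c m hm
    simp only [AddMonoidAlgebra.coe_algebraMap, Function.comp_apply,
      AddMonoidAlgebra.coeff_single] at hm
    have := Finsupp.support_single_subset hm
    rw [Finset.mem_singleton] at this
    rw [this]
    exact P.zero_mem

lemma chi_mem (K : Type) [Field K] (n : ℕ) (P : AddSubmonoid (Fin n → ℤ))
    {m : Fin n → ℤ} (hm : m ∈ P) : chi K n m ∈ monAlg K n P := by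
  intro x hx
  have := Finsupp.support_single_subset hx
  rw [Finset.mem_singleton] at this
  rwa [this]

/-- The character `χ^m` as an element of `K[P]`. -/
def chiP (K : Type) [Field K] (n : ℕ) (P : AddSubmonoid (Fin n → ℤ))
    (m : Fin n → ℤ) (hm : m ∈ P) : monAlg K n P :=
  ⟨chi K n m, chi_mem K n P hm⟩

/-- A derivation is locally nilpotent if every element is killed by some power. -/
def IsLND {R A : Type*} [CommRing R] [CommRing A] [Algebra R A]
    (δ : Derivation R A A) : Prop :=
  ∀ f : A, ∃ k : ℕ, (δ.toLinearMap ^ k) f = 0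

/-- A slice of a derivation is an element mapped to `1`. -/
def HasSlice {R A : Type*} [CommRing R] [CommRing A] [Algebra R A]
    (δ : Derivation R A A) : Prop :=
  ∃ s : A, δ s = 1

/-- A derivation of `K[P]` is `M`-homogeneous of degree `e` if it maps `K·χ^m`
into `K·χ^{m+e}` for all `m ∈ P`. -/
def IsHomog (K : Type) [Field K] (n : ℕ) (P : AddSubmonoid (Fin n → ℤ))
    (δ : Derivation K (monAlg K n P) (monAlg K n P)) (e : Fin n → ℤ) : Prop :=
  ∀ (m : Fin n → ℤ) (hm : m ∈ P), ∃ c : K,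
    ((δ (chiP K n P m hm) : monAlg K n P) : Laurent K n) = AddMonoidAlgebra.single (m + e) c

/-- The Makar-Limanov invariant of `K[P]`: intersection of kernels of all LNDs. -/
def ML (K : Type) [Field K] (n : ℕ) (P : AddSubmonoid (Fin n → ℤ)) :
    Set (monAlg K n P) :=
  {f | ∀ δ : Derivation K (monAlg K n P) (monAlg K n P), IsLND δ → δ f = 0}

/-- The homogeneous Makar-Limanov invariant: intersection of kernels of all
`M`-homogeneous LNDs. -/
def MLh (K : Type) [Field K] (n : ℕ) (P : AddSubmonoid (Fin n → ℤ)) :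
    Set (monAlg K n P) :=
  {f | ∀ δ : Derivation K (monAlg K n P) (monAlg K n P),
    IsLND δ → (∃ e : Fin n → ℤ, IsHomog K n P δ e) → δ f = 0}

/-- The Makar-Limanov--Freudenburg invariant: intersection of kernels of all
LNDs admitting a slice. -/
def MLstar (K : Type) [Field K] (n : ℕ) (P : AddSubmonoid (Fin n → ℤ)) :
    Set (monAlg K n P) :=
  {f | ∀ δ : Derivation K (monAlg K n P) (monAlg K n P), IsLND δ → HasSlice δ → δ f = 0}

/-- Intersection of kernels of all homogeneous LNDs admitting a slice. -/
def MLstarh (K : Type) [Field K] (n : ℕ) (P : AddSubmonoid (Fin n → ℤ)) :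
    Set (monAlg K n P) :=
  {f | ∀ δ : Derivation K (monAlg K n P) (monAlg K n P),
    IsLND δ → HasSlice δ → (∃ e : Fin n → ℤ, IsHomog K n P δ e) → δ f = 0}

/-! ### Cones -/

/-- Embedding `ℤⁿ → ℚⁿ`. -/
def toQ (n : ℕ) (m : Fin n → ℤ) : Fin n → ℚ := fun i => (m i : ℚ)

lemma toQ_add (n : ℕ) (a b : Fin n → ℤ) : toQ n (a + b) = toQ n a + toQ n b := by
  funext i; simp [toQ]

lemma toQ_nsmul (n : ℕ) (k : ℕ) (a : Fin n → ℤ) : toQ n (k • a) = (k : ℚ) • toQ n a := by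
  funext i; simp [toQ]

lemma toQ_inj {n : ℕ} {a b : Fin n → ℤ} (h : toQ n a = toQ n b) : a = b := by
  funext i
  have := congrFun h i
  simp only [toQ] at this
  exact_mod_cast this

/-- The natural pairing between `ℚⁿ` and its dual. -/
def pairQ (n : ℕ) (w v : Fin n → ℚ) : ℚ := ∑ i, w i * v i

/-- The natural pairing between `M = ℤⁿ` and `N = ℤⁿ`. -/
def pairZ (n : ℕ) (w v : Fin n → ℤ) : ℤ := ∑ i, w i * v i

/-- The cone `σ∨ = ℚ_{≥0}·P ⊆ ℚⁿ` generated by `P`. -/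
def coneOf (n : ℕ) (P : AddSubmonoid (Fin n → ℤ)) : Set (Fin n → ℚ) :=
  {x | ∃ c : ℚ, 0 ≤ c ∧ ∃ p ∈ P, x = c • toQ n p}

/-- The dual cone of a subset of `ℚⁿ`. -/
def dualCone (n : ℕ) (s : Set (Fin n → ℚ)) : Set (Fin n → ℚ) :=
  {v | ∀ w ∈ s, 0 ≤ pairQ n w v}

/-- The cone `σ ⊆ ℚⁿ` dual to `σ∨`. -/
def sigma (n : ℕ) (P : AddSubmonoid (Fin n → ℤ)) : Set (Fin n → ℚ) :=
  dualCone n (coneOf n P)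

/-- The ray `ℚ_{≥0}·v`. -/
def rayOf (n : ℕ) (v : Fin n → ℚ) : Set (Fin n → ℚ) :=
  {x | ∃ c : ℚ, 0 ≤ c ∧ x = c • v}

/-- A cone is pointed if it contains no line. -/
def IsPointed (n : ℕ) (s : Set (Fin n → ℚ)) : Prop :=
  ∀ x ∈ s, -x ∈ s → x = 0

/-- `v` generates an extremal ray of the cone `s`. -/
def IsExtremalGen (n : ℕ) (s : Set (Fin n → ℚ)) (v : Fin n → ℚ) : Prop :=
  v ≠ 0 ∧ v ∈ s ∧ ∀ x ∈ s, ∀ y ∈ s, x + y ∈ rayOf n v → x ∈ rayOf n v ∧ y ∈ rayOf n v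

/-- A primitive lattice vector: the gcd of its coordinates is `1`. -/
def IsPrimitive (n : ℕ) (u : Fin n → ℤ) : Prop :=
  Finset.univ.gcd u = 1

/-- `u` is the primitive lattice generator of an extremal ray of `σ`. -/
def IsExtGenOfSigma (n : ℕ) (P : AddSubmonoid (Fin n → ℤ)) (u : Fin n → ℤ) : Prop :=
  IsPrimitive n u ∧ IsExtremalGen n (sigma n P) (toQ n u)

/-- `e` is a Demazure root associated to the extremal ray of `σ` with primitive
generator `u`. -/
def IsDemazureRoot (n : ℕ) (P : AddSubmonoid (Fin n → ℤ)) (u e : Fin n → ℤ) : Prop :=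
  IsExtGenOfSigma n P u ∧ pairZ n e u = -1 ∧
    ∀ u' : Fin n → ℤ, IsExtGenOfSigma n P u' → u' ≠ u → 0 ≤ pairZ n e u'

lemma mem_coneOf_int (n : ℕ) (P : AddSubmonoid (Fin n → ℤ)) (m : Fin n → ℤ) :
    toQ n m ∈ coneOf n P ↔ ∃ k : ℕ, 0 < k ∧ k • m ∈ P := by
  constructor
  · rintro ⟨c, hc, p, hp, heq⟩
    refine ⟨c.den, c.pos, ?_⟩
    have hnum : (0:ℤ) ≤ c.num := Rat.num_nonneg.mpr hc
    have key : c.den • m = c.num.toNat • p := by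
      apply toQ_inj
      rw [toQ_nsmul, toQ_nsmul, heq, smul_smul]
      congr 1
      have hden : (c.den : ℚ) ≠ 0 := Nat.cast_ne_zero.mpr c.den_nz
      have h2 : (c.num : ℚ) = c * c.den := (div_eq_iff hden).mp (Rat.num_div_den c)
      have h1 : ((c.num.toNat : ℕ) : ℚ) = (c.num : ℚ) := by
        exact_mod_cast Int.toNat_of_nonneg hnum
      rw [h1, h2]
      ring
    rw [key]
    exact AddSubmonoid.nsmul_mem P hp _
  · rintro ⟨k, hk, hkm⟩
    refine ⟨(k : ℚ)⁻¹, by positivity, k • m, hkm, ?_⟩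
    rw [toQ_nsmul, smul_smul]
    rw [inv_mul_cancel₀ (by exact_mod_cast hk.ne')]
    rw [one_smul]

/-- The saturation `P_sat = σ∨ ∩ M` of `P`. -/
def Psat (n : ℕ) (P : AddSubmonoid (Fin n → ℤ)) : AddSubmonoid (Fin n → ℤ) where
  carrier := {m | toQ n m ∈ coneOf n P}
  zero_mem' := by
    refine ⟨0, le_refl 0, 0, P.zero_mem, ?_⟩
    funext i; simp [toQ]
  add_mem' := by
    intro a b ha hb
    rw [Set.mem_setOf_eq, mem_coneOf_int] at ha hb ⊢
    obtain ⟨k, hk, hka⟩ := ha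
    obtain ⟨l, hl, hlb⟩ := hb
    refine ⟨k * l, Nat.mul_pos hk hl, ?_⟩
    have : (k * l) • (a + b) = l • (k • a) + k • (l • b) := by
      rw [smul_add, smul_smul, smul_smul, mul_comm l k]
    rw [this]
    exact P.add_mem (AddSubmonoid.nsmul_mem P hka l) (AddSubmonoid.nsmul_mem P hlb k)

lemma le_Psat (n : ℕ) (P : AddSubmonoid (Fin n → ℤ)) : P ≤ Psat n P := by
  intro m hm
  exact ⟨1, zero_le_one, m, hm, (one_smul _ _).symm⟩

lemma monAlg_mono (K : Type) [Field K] (n : ℕ) {P Q : AddSubmonoid (Fin n → ℤ)}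
    (h : P ≤ Q) : monAlg K n P ≤ monAlg K n Q :=
  fun _ hf m hm => h (hf m hm)

/-- `p` is a saturation point of `P`: `(p + σ∨) ∩ M ⊆ P`. -/
def IsSatPoint (n : ℕ) (P : AddSubmonoid (Fin n → ℤ)) (p : Fin n → ℤ) : Prop :=
  p ∈ P ∧ ∀ q ∈ Psat n P, p + q ∈ P

/-- The facet of `σ∨` corresponding to the extremal ray of `σ` with primitive
generator `u`: `σ∨ ∩ u^⊥`. -/
def facet (n : ℕ) (P : AddSubmonoid (Fin n → ℤ)) (u : Fin n → ℤ) : Set (Fin n → ℚ) :=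
  {x | x ∈ coneOf n P ∧ pairQ n x (toQ n u) = 0}

/-- The intersection of all facets of `σ∨` other than the one corresponding to `u`. -/
def facetInter (n : ℕ) (P : AddSubmonoid (Fin n → ℤ)) (u : Fin n → ℤ) :
    Set (Fin n → ℚ) :=
  ⋂ u' ∈ {u' : Fin n → ℤ | IsExtGenOfSigma n P u' ∧ u' ≠ u}, facet n P u'

/-- The facet of `σ∨` corresponding to `u` is affine: it is saturated
(`F ∩ M ⊆ P`) and the intersection of all other facets is one-dimensional. -/
def IsAffineFacet (n : ℕ) (P : AddSubmonoid (Fin n → ℤ)) (u : Fin n → ℤ) : Prop :=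
  IsExtGenOfSigma n P u ∧
  (∀ m : Fin n → ℤ, toQ n m ∈ facet n P u → m ∈ P) ∧
  (∃ v : Fin n → ℚ, v ≠ 0 ∧ facetInter n P u = rayOf n v)

/-- The extremal ray of `σ∨` with primitive vector `r`, corresponding to the
affine facet of `u`, is affine. -/
def IsAffineRay (n : ℕ) (P : AddSubmonoid (Fin n → ℤ)) (u r : Fin n → ℤ) : Prop :=
  IsPrimitive n r ∧ IsExtremalGen n (coneOf n P) (toQ n r) ∧
  toQ n r ∉ facet n P u ∧
  r ∈ P ∧ pairZ n r u = 1 ∧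
  ∀ h : Fin n → ℤ, toQ n h ∈ facet n P u → h ∉ P →
    ∀ k : ℕ, 0 < k → h + k • r ∉ P

/-- `r` is the primitive vector of an affine ray of `σ∨`. -/
def IsAffineRayAbs (n : ℕ) (P : AddSubmonoid (Fin n → ℤ)) (r : Fin n → ℤ) : Prop :=
  ∃ u : Fin n → ℤ, IsAffineFacet n P u ∧ IsAffineRay n P u r

/-- The intersection `τ₀` of all affine facets of `σ∨`. -/
def affInter (n : ℕ) (P : AddSubmonoid (Fin n → ℤ)) : Set (Fin n → ℚ) :=
  ⋂ u ∈ {u : Fin n → ℤ | IsAffineFacet n P u}, facet n P u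

lemma pairQ_add_left (n : ℕ) (x y v : Fin n → ℚ) :
    pairQ n (x + y) v = pairQ n x v + pairQ n y v := by
  simp [pairQ, add_mul, Finset.sum_add_distrib]

/-- `ML*_h(K[P])` as a subalgebra of `K[P]`. -/
def MLstarhAlg (K : Type) [Field K] (n : ℕ) (P : AddSubmonoid (Fin n → ℤ)) :
    Subalgebra K (monAlg K n P) where
  carrier := MLstarh K n P
  mul_mem' := by
    intro a b ha hb δ h1 h2 h3
    rw [Derivation.leibniz, ha δ h1 h2 h3, hb δ h1 h2 h3, smul_zero, smul_zero, add_zero]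
  add_mem' := by
    intro a b ha hb δ h1 h2 h3
    rw [map_add, ha δ h1 h2 h3, hb δ h1 h2 h3, add_zero]
  algebraMap_mem' := by
    intro c δ _ _ _
    exact Derivation.map_algebraMap δ c

/-- The submonoid `P ∩ τ₀`, where `τ₀` is the intersection of all affine facets. -/
def PtauZero (n : ℕ) (P : AddSubmonoid (Fin n → ℤ)) : AddSubmonoid (Fin n → ℤ) where
  carrier := {m | m ∈ P ∧ toQ n m ∈ affInter n P}
  zero_mem' := by
    refine ⟨P.zero_mem, ?_⟩
    simp only [affInter, Set.mem_iInter]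
    intro u hu
    refine ⟨⟨0, le_refl 0, 0, P.zero_mem, ?_⟩, ?_⟩
    · funext i; simp [toQ]
    · simp [pairQ, toQ]
  add_mem' := by
    rintro a b ⟨haP, ha⟩ ⟨hbP, hb⟩
    refine ⟨P.add_mem haP hbP, ?_⟩
    simp only [affInter, Set.mem_iInter] at ha hb ⊢
    intro u hu
    obtain ⟨-, ha2⟩ := ha u hu
    obtain ⟨-, hb2⟩ := hb u hu
    refine ⟨⟨1, zero_le_one, a + b, P.add_mem haP hbP, (one_smul _ _).symm⟩, ?_⟩
    rw [toQ_add, pairQ_add_left, ha2, hb2, add_zero]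


variable {K : Type} [Field K] {n : ℕ} {P : AddSubmonoid (Fin n → ℤ)}

lemma val_chiP (m : Fin n → ℤ) (hm : m ∈ P) :
    ((chiP K n P m hm : monAlg K n P) : Laurent K n) = AddMonoidAlgebra.single m 1 := rfl

lemma chiP_mul (m : Fin n → ℤ) (hm : m ∈ P) (m' : Fin n → ℤ) (hm' : m' ∈ P) :
    chiP K n P m hm * chiP K n P m' hm' = chiP K n P (m + m') (P.add_mem hm hm') := by
  apply Subtype.ext
  show chi K n m * chi K n m' = chi K n (m + m')
  simp [chi, AddMonoidAlgebra.single_mul_single]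

lemma chiP_zero : chiP K n P 0 P.zero_mem = 1 := by
  apply Subtype.ext
  show chi K n 0 = 1
  rfl

lemma chiP_ne_zero (m : Fin n → ℤ) (hm : m ∈ P) : chiP K n P m hm ≠ 0 := by
  intro h
  have := congrArg (fun x : monAlg K n P => (x : Laurent K n)) h
  simp only [val_chiP] at this
  exact one_ne_zero (AddMonoidAlgebra.single_eq_zero.mp this)

lemma chiP_pow (m : Fin n → ℤ) (hm : m ∈ P) (k : ℕ) :
    chiP K n P m hm ^ k = chiP K n P (k • m) (P.nsmul_mem hm k) := by
  apply Subtype.ext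
  show chi K n m ^ k = chi K n (k • m)
  simp [chi, AddMonoidAlgebra.single_pow]

lemma chiP_not_bot {m : Fin n → ℤ} (hm : m ∈ P) (hm0 : m ≠ 0) :
    chiP K n P m hm ∉ (⊥ : Subalgebra K (monAlg K n P)) := by
  rw [Algebra.mem_bot]
  rintro ⟨c, hc⟩
  have hval := congrArg (fun x : monAlg K n P => (x : Laurent K n)) hc
  have : ((algebraMap K (monAlg K n P) c : monAlg K n P) : Laurent K n)
      = AddMonoidAlgebra.single 0 c := by
    show ((algebraMap K (Laurent K n)) c) = _
    rfl
  simp only [this, val_chiP] at hval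
  rcases AddMonoidAlgebra.single_inj.mp hval with ⟨h, -⟩ | ⟨-, h⟩
  · exact hm0 h.symm
  · exact one_ne_zero h

/-- decomposition of an element of `monAlg` as a sum of characters -/
lemma monAlg_eq_sum (f : monAlg K n P) :
    f = ∑ m ∈ (f : Laurent K n).coeff.support.attach,
      ((f : Laurent K n).coeff m.1) • chiP K n P m.1 (f.2 m.1 m.2) := by
  apply Subtype.ext
  rw [AddSubmonoidClass.coe_finset_sum]
  simp only [SetLike.val_smul, val_chiP, Finsupp.smul_single', AddMonoidAlgebra.smul_single', mul_one]
  rw [Finset.sum_attach _ (fun m => AddMonoidAlgebra.single m ((f : Laurent K n).coeff m))]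
  exact (AddMonoidAlgebra.sum_coeff_single (f : Laurent K n)).symm


/-! ### Monoid combinatorics -/


lemma pointedP (hpt : IsPointed n (coneOf n P)) :
    ∀ p ∈ P, -p ∈ P → p = 0 := by
  intro p hp hnp
  have h1 : toQ n p ∈ coneOf n P := ⟨1, zero_le_one, p, hp, (one_smul _ _).symm⟩
  have h2 : -(toQ n p) ∈ coneOf n P := by
    refine ⟨1, zero_le_one, -p, hnp, ?_⟩
    rw [one_smul]
    funext i; simp [toQ]
  have := hpt _ h1 h2
  have hz : toQ n p = toQ n (0 : Fin n → ℤ) := by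
    rw [this]; funext i; simp [toQ]
  exact toQ_inj hz

/-- atoms of `P` -/
def IsAtomP (P : AddSubmonoid (Fin n → ℤ)) (a : Fin n → ℤ) : Prop :=
  a ∈ P ∧ a ≠ 0 ∧ ∀ x ∈ P, ∀ y ∈ P, x + y = a → x = 0 ∨ y = 0

/-- existence of a minimal generating set avoiding 0 -/
lemma exists_minimal_genset (hfg : P.FG) :
    ∃ G : Finset (Fin n → ℤ), (0 : Fin n → ℤ) ∉ G ∧
      AddSubmonoid.closure (G : Set (Fin n → ℤ)) = P ∧
      ∀ g ∈ G, AddSubmonoid.closure ((G.erase g : Finset (Fin n → ℤ)) : Set (Fin n → ℤ)) ≠ P := by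
  obtain ⟨S, hS⟩ := hfg
  -- remove 0
  have hS0 : AddSubmonoid.closure ((S.erase 0 : Finset (Fin n → ℤ)) : Set (Fin n → ℤ)) = P := by
    apply le_antisymm
    · rw [← hS]
      exact AddSubmonoid.closure_mono (fun x hx => (Finset.mem_erase.mp hx).2)
    · rw [← hS]
      rw [AddSubmonoid.closure_le]
      intro x hx
      by_cases hx0 : x = 0
      · rw [hx0]; exact AddSubmonoid.zero_mem _
      · exact AddSubmonoid.subset_closure (Finset.mem_erase.mpr ⟨hx0, hx⟩)
  -- now minimize by strong induction on card
  clear hS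
  set T := S.erase 0 with hT
  have hT0 : (0 : Fin n → ℤ) ∉ T := Finset.notMem_erase _ _
  clear_value T
  clear hT
  induction T using Finset.strongInduction with
  | _ T ih =>
    by_cases h : ∀ g ∈ T, AddSubmonoid.closure ((T.erase g : Finset (Fin n → ℤ)) : Set (Fin n → ℤ)) ≠ P
    · exact ⟨T, hT0, hS0, h⟩
    · push_neg at h
      obtain ⟨g, hg, hgcl⟩ := h
      exact ih (T.erase g) (Finset.erase_ssubset hg) hgcl
        (fun h0 => hT0 (Finset.mem_of_mem_erase h0))

/-- members of a minimal generating set are atoms -/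
lemma minimal_genset_atoms (hptP : ∀ p ∈ P, -p ∈ P → p = 0)
    (G : Finset (Fin n → ℤ)) (hG0 : (0 : Fin n → ℤ) ∉ G)
    (hGcl : AddSubmonoid.closure (G : Set (Fin n → ℤ)) = P)
    (hmin : ∀ g ∈ G, AddSubmonoid.closure ((G.erase g : Finset (Fin n → ℤ)) : Set (Fin n → ℤ)) ≠ P) :
    ∀ g ∈ G, IsAtomP P g := by
  intro g hg
  have hgP : g ∈ P := by
    rw [← hGcl]; exact AddSubmonoid.subset_closure hg
  refine ⟨hgP, fun h => hG0 (h ▸ hg), ?_⟩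
  intro x hx y hy hxy
  by_contra hcon
  push_neg at hcon
  obtain ⟨hx0, hy0⟩ := hcon
  -- key: every z ∈ P is in closure (G.erase g) or has the form g + s with s ∈ P
  have key : ∀ z ∈ P, z ∈ AddSubmonoid.closure ((G.erase g : Finset (Fin n → ℤ)) : Set (Fin n → ℤ))
      ∨ ∃ s ∈ P, z = g + s := by
    intro z hz
    rw [← hGcl] at hz
    induction hz using AddSubmonoid.closure_induction with
    | mem w hw =>
      by_cases hwg : w = g
      · exact Or.inr ⟨0, P.zero_mem, by rw [hwg, add_zero]⟩
      · exact Or.inl (AddSubmonoid.subset_closure (Finset.mem_coe.mpr (Finset.mem_erase.mpr ⟨hwg, hw⟩)))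
    | zero => exact Or.inl (AddSubmonoid.zero_mem _)
    | add z₁ z₂ hz₁ hz₂ ih₁ ih₂ =>
      rcases ih₁ with h₁ | ⟨s, hs, rfl⟩
      · rcases ih₂ with h₂ | ⟨s, hs, rfl⟩
        · exact Or.inl (AddSubmonoid.add_mem _ h₁ h₂)
        · refine Or.inr ⟨s + z₁, P.add_mem hs ?_, by abel⟩
          rw [← hGcl]; exact hz₁
      · refine Or.inr ⟨s + z₂, P.add_mem hs ?_, by abel⟩
        rw [← hGcl]; exact hz₂
  -- x and y are not of the form g + s
  have hxcl : x ∈ AddSubmonoid.closure ((G.erase g : Finset (Fin n → ℤ)) : Set (Fin n → ℤ)) := by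
    rcases key x hx with h | ⟨s, hs, rfl⟩
    · exact h
    · exfalso
      have hsy : s + y = 0 := by
        have h2 : g + (s + y) = g + 0 := by
          rw [add_zero]
          calc g + (s + y) = g + s + y := by abel
          _ = g := hxy
        exact add_left_cancel h2
      have hsny : s = -y := eq_neg_of_add_eq_zero_left hsy
      have hy' : y = 0 := hptP y hy (hsny ▸ hs)
      exact hy0 hy'
  have hycl : y ∈ AddSubmonoid.closure ((G.erase g : Finset (Fin n → ℤ)) : Set (Fin n → ℤ)) := by
    rcases key y hy with h | ⟨s, hs, rfl⟩
    · exact h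
    · exfalso
      have hsx : s + x = 0 := by
        have h2 : g + (s + x) = g + 0 := by
          rw [add_zero]
          calc g + (s + x) = x + (g + s) := by abel
          _ = g := hxy
        exact add_left_cancel h2
      have hsnx : s = -x := eq_neg_of_add_eq_zero_left hsx
      have hx' : x = 0 := hptP x hx (hsnx ▸ hs)
      exact hx0 hx'
  -- then g itself is in the closure of the erased set, contradiction
  apply hmin g hg
  apply le_antisymm
  · rw [← hGcl]
    exact AddSubmonoid.closure_mono (fun w hw => Finset.mem_of_mem_erase hw)
  · rw [← hGcl, AddSubmonoid.closure_le]
    intro w hw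
    by_cases hwg : w = g
    · subst hwg
      have hsum := AddSubmonoid.add_mem _ hxcl hycl
      rwa [hxy] at hsum
    · exact AddSubmonoid.subset_closure (Finset.mem_erase.mpr ⟨hwg, hw⟩)


/-! ### FreeOn -/

def toQlin (n : ℕ) : (Fin n → ℤ) →ₗ[ℤ] (Fin n → ℚ) where
  toFun := toQ n
  map_add' a b := by funext i; simp [toQ]
  map_smul' c a := by funext i; simp [toQ]

def FreeOn (n : ℕ) (P : AddSubmonoid (Fin n → ℤ)) : Prop :=
  ∃ b : Fin n → (Fin n → ℤ), LinearIndependent ℤ b ∧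
    Submodule.span ℤ (Set.range b) = ⊤ ∧
    AddSubmonoid.closure (Set.range b) = P

lemma freeOn_of_card_le
    (hgen : AddSubgroup.closure (P : Set (Fin n → ℤ)) = ⊤)
    (G : Finset (Fin n → ℤ))
    (hGcl : AddSubmonoid.closure (G : Set (Fin n → ℤ)) = P)
    (hcard : G.card ≤ n) : FreeOn n P := by
  classical
  -- G generates ℤⁿ as a group
  have hZ : AddSubgroup.closure (G : Set (Fin n → ℤ)) = ⊤ := by
    apply le_antisymm le_top
    rw [← hgen, AddSubgroup.closure_le]
    intro p hp
    rw [← hGcl] at hp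
    have h1 : AddSubmonoid.closure (G : Set (Fin n → ℤ)) ≤
        (AddSubgroup.closure (G : Set (Fin n → ℤ))).toAddSubmonoid := by
      rw [AddSubmonoid.closure_le]
      exact AddSubgroup.subset_closure
    exact h1 hp
  -- hence it spans ℤⁿ over ℤ
  have hspanZ : Submodule.span ℤ (G : Set (Fin n → ℤ)) = ⊤ := by
    apply le_antisymm le_top
    intro x _
    have h1 : AddSubgroup.closure (G : Set (Fin n → ℤ)) ≤
        (Submodule.span ℤ (G : Set (Fin n → ℤ))).toAddSubgroup := by
      rw [AddSubgroup.closure_le]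
      exact Submodule.subset_span
    exact h1 (hZ ▸ AddSubgroup.mem_top x)
  -- the rational family
  set v : ↥G → (Fin n → ℚ) := fun g => toQ n (g : Fin n → ℤ) with hv
  have hspanQ : Submodule.span ℚ (Set.range v) = ⊤ := by
    apply le_antisymm le_top
    have hint : ∀ z : Fin n → ℤ, toQ n z ∈ Submodule.span ℚ (Set.range v) := by
      intro z
      have hz : z ∈ AddSubgroup.closure (G : Set (Fin n → ℤ)) := hZ ▸ AddSubgroup.mem_top z
      induction hz using AddSubgroup.closure_induction with
      | mem w hw => exact Submodule.subset_span ⟨⟨w, hw⟩, rfl⟩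
      | zero =>
        have : toQ n (0 : Fin n → ℤ) = 0 := by funext i; simp [toQ]
        rw [this]; exact Submodule.zero_mem _
      | add a b _ _ iha ihb =>
        have : toQ n (a + b) = toQ n a + toQ n b := by funext i; simp [toQ]
        rw [this]; exact Submodule.add_mem _ iha ihb
      | neg a _ iha =>
        have : toQ n (-a) = -(toQ n a) := by funext i; simp [toQ]
        rw [this]; exact Submodule.neg_mem _ iha
    rw [← (Pi.basisFun ℚ (Fin n)).span_eq, Submodule.span_le]
    rintro x ⟨i, rfl⟩
    have : (Pi.basisFun ℚ (Fin n)) i = toQ n (Pi.single i 1) := by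
      funext j
      simp [toQ, Pi.basisFun_apply, Pi.single_apply]
    rw [this]
    exact hint _
  have hfinG : n ≤ G.card := by
    have h1 : Module.finrank ℚ ↥(Submodule.span ℚ (Set.range v)) ≤
        (Set.range v).toFinset.card := finrank_span_le_card _
    have h2 : (Set.range v).toFinset.card ≤ Fintype.card ↥G := by
      rw [Set.toFinset_range]
      exact Finset.card_image_le.trans (by rw [Finset.card_univ])
    have h3 : Module.finrank ℚ ↥(Submodule.span ℚ (Set.range v)) = n := by
      rw [hspanQ]
      rw [finrank_top]
      exact Module.finrank_fin_fun ℚ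
    rw [Fintype.card_coe] at h2
    omega
  have hcard' : G.card = n := le_antisymm hcard hfinG
  have hcardG : Fintype.card ↥G = n := by rw [Fintype.card_coe]; exact hcard'
  -- independence over ℚ
  have hindQ : LinearIndependent ℚ v :=
    linearIndependent_of_top_le_span_of_card_eq_finrank (hspanQ.symm ▸ le_rfl)
      (by rw [hcardG, Module.finrank_fin_fun])
  -- independence over ℤ
  have hindZ : LinearIndependent ℤ (fun g : ↥G => (g : Fin n → ℤ)) := by
    rw [Fintype.linearIndependent_iff]
    intro g hg i
    have hQ : ∑ a : ↥G, ((g a : ℚ)) • v a = 0 := by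
      have := congrArg (toQlin n) hg
      rw [map_sum, map_zero] at this
      rw [← this]
      apply Finset.sum_congr rfl
      intro a _
      rw [map_zsmul (toQlin n) (g a) (a : Fin n → ℤ), Int.cast_smul_eq_zsmul ℚ]
      rfl
    have := Fintype.linearIndependent_iff.mp hindQ (fun a => (g a : ℚ)) hQ i
    exact_mod_cast this
  -- package as basis indexed by Fin n
  have e : Fin n ≃ ↥G := (Fintype.equivFinOfCardEq hcardG).symm
  refine ⟨fun i => ((e i : Fin n → ℤ)), ?_, ?_, ?_⟩
  · exact hindZ.comp e e.injective
  · have hr : Set.range (fun i => ((e i : Fin n → ℤ))) = (G : Set (Fin n → ℤ)) := by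
      ext x
      constructor
      · rintro ⟨i, rfl⟩; exact (e i).2
      · intro hx
        exact ⟨e.symm ⟨x, hx⟩, by simp⟩
    rw [hr]; exact hspanZ
  · have hr : Set.range (fun i => ((e i : Fin n → ℤ))) = (G : Set (Fin n → ℤ)) := by
      ext x
      constructor
      · rintro ⟨i, rfl⟩; exact (e i).2
      · intro hx
        exact ⟨e.symm ⟨x, hx⟩, by simp⟩
    rw [hr]; exact hGcl


section DerivAnalysis

variable {K : Type} [Field K] [CharZero K] {n : ℕ} {P : AddSubmonoid (Fin n → ℤ)}
variable (δ : Derivation K (monAlg K n P) (monAlg K n P)) {e : Fin n → ℤ}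

/-- the coefficient of a homogeneous derivation on `χ^m` -/
def cdeg (hhom : IsHomog K n P δ e) (m : Fin n → ℤ) (hm : m ∈ P) : K :=
  Classical.choose (hhom m hm)

lemma cdeg_spec (hhom : IsHomog K n P δ e) (m : Fin n → ℤ) (hm : m ∈ P) :
    ((δ (chiP K n P m hm) : monAlg K n P) : Laurent K n)
      = AddMonoidAlgebra.single (m + e) (cdeg δ hhom m hm) :=
  Classical.choose_spec (hhom m hm)

lemma cdeg_congr (hhom : IsHomog K n P δ e) {m m' : Fin n → ℤ} (hm : m ∈ P) (hm' : m' ∈ P)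
    (h : m = m') : cdeg δ hhom m hm = cdeg δ hhom m' hm' := by subst h; rfl

lemma deriv_chiP_zero (hhom : IsHomog K n P δ e) (m : Fin n → ℤ) (hm : m ∈ P)
    (h : cdeg δ hhom m hm = 0) : δ (chiP K n P m hm) = 0 := by
  apply Subtype.ext
  have := cdeg_spec δ hhom m hm
  rw [h, AddMonoidAlgebra.single_zero] at this
  exact this

lemma mem_of_cdeg_ne (hhom : IsHomog K n P δ e) (m : Fin n → ℤ) (hm : m ∈ P)
    (h : cdeg δ hhom m hm ≠ 0) : m + e ∈ P := by
  have hmem := (δ (chiP K n P m hm)).2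
  apply hmem
  rw [cdeg_spec δ hhom m hm]
  rw [AddMonoidAlgebra.coeff_single, Finsupp.support_single_ne_zero _ h]
  exact Finset.mem_singleton_self _

lemma deriv_chiP_eq (hhom : IsHomog K n P δ e) (m : Fin n → ℤ) (hm : m ∈ P)
    (h : cdeg δ hhom m hm ≠ 0) :
    δ (chiP K n P m hm) = cdeg δ hhom m hm • chiP K n P (m + e) (mem_of_cdeg_ne δ hhom m hm h) := by
  apply Subtype.ext
  rw [cdeg_spec δ hhom m hm]
  show _ = cdeg δ hhom m hm • (AddMonoidAlgebra.single (m+e) (1:K))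
  rw [AddMonoidAlgebra.smul_single, smul_eq_mul, mul_one]

lemma cdeg_add (hhom : IsHomog K n P δ e) (m m' : Fin n → ℤ) (hm : m ∈ P) (hm' : m' ∈ P) :
    cdeg δ hhom (m + m') (P.add_mem hm hm') = cdeg δ hhom m hm + cdeg δ hhom m' hm' := by
  have hmul : chiP K n P (m + m') (P.add_mem hm hm')
      = chiP K n P m hm * chiP K n P m' hm' := (chiP_mul m hm m' hm').symm
  have hL := congrArg (fun x : monAlg K n P => (x : Laurent K n)) (congrArg δ hmul)
  simp only [Derivation.leibniz, smul_eq_mul] at hL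
  have hval : ((δ (chiP K n P (m+m') (P.add_mem hm hm')) : monAlg K n P) : Laurent K n)
      = AddMonoidAlgebra.single (m + m' + e) (cdeg δ hhom m hm + cdeg δ hhom m' hm') := by
    rw [hL]
    push_cast
    show (chiP K n P m hm : Laurent K n) * _ + (chiP K n P m' hm' : Laurent K n) * _ = _
    rw [val_chiP, val_chiP, cdeg_spec δ hhom m hm, cdeg_spec δ hhom m' hm']
    rw [AddMonoidAlgebra.single_mul_single, AddMonoidAlgebra.single_mul_single]
    rw [one_mul, one_mul]
    have h1 : m + (m' + e) = m + m' + e := by abel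
    have h2 : m' + (m + e) = m + m' + e := by abel
    rw [h1, h2, ← AddMonoidAlgebra.single_add]
    rw [add_comm (cdeg δ hhom m' hm')]
  rw [cdeg_spec δ hhom (m+m') (P.add_mem hm hm')] at hval
  exact AddMonoidAlgebra.single_right_injective hval

lemma cdeg_zero (hhom : IsHomog K n P δ e) : cdeg δ hhom 0 P.zero_mem = 0 := by
  have h1 : δ (chiP K n P 0 P.zero_mem) = 0 := by
    rw [chiP_zero]; exact Derivation.map_one_eq_zero δ
  have h2 := cdeg_spec δ hhom 0 P.zero_mem
  rw [h1] at h2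
  have h3 : (0 : Laurent K n) = AddMonoidAlgebra.single (0 + e) (cdeg δ hhom 0 P.zero_mem) := by
    rw [← h2]; rfl
  exact AddMonoidAlgebra.single_eq_zero.mp h3.symm

/-- minimal vanishing exponent -/
def Ndeg (hlnd : IsLND δ) (m : Fin n → ℤ) (hm : m ∈ P) : ℕ :=
  @Nat.find (fun k => (δ.toLinearMap ^ k) (chiP K n P m hm) = 0) (Classical.decPred _)
    (hlnd (chiP K n P m hm))

lemma Ndeg_spec (hlnd : IsLND δ) (m : Fin n → ℤ) (hm : m ∈ P) :
    (δ.toLinearMap ^ (Ndeg δ hlnd m hm)) (chiP K n P m hm) = 0 :=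
  @Nat.find_spec (fun k => (δ.toLinearMap ^ k) (chiP K n P m hm) = 0) (Classical.decPred _) _

lemma Ndeg_min (hlnd : IsLND δ) (m : Fin n → ℤ) (hm : m ∈ P) {k : ℕ}
    (hk : k < Ndeg δ hlnd m hm) : (δ.toLinearMap ^ k) (chiP K n P m hm) ≠ 0 :=
  @Nat.find_min (fun k => (δ.toLinearMap ^ k) (chiP K n P m hm) = 0) (Classical.decPred _) _ k hk

lemma Ndeg_pos (hlnd : IsLND δ) (m : Fin n → ℤ) (hm : m ∈ P) : 0 < Ndeg δ hlnd m hm := by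
  rcases Nat.eq_zero_or_pos (Ndeg δ hlnd m hm) with h | h
  · exfalso
    have := Ndeg_spec δ hlnd m hm
    rw [h, pow_zero] at this
    exact chiP_ne_zero m hm (by simpa using this)
  · exact h

def udeg (hlnd : IsLND δ) (m : Fin n → ℤ) (hm : m ∈ P) : ℕ := Ndeg δ hlnd m hm - 1

lemma pow_succ_apply (k : ℕ) (x : monAlg K n P) :
    (δ.toLinearMap ^ (k+1)) x = (δ.toLinearMap ^ k) (δ x) := by
  rw [pow_succ, Module.End.mul_apply]
  rfl

lemma Ndeg_le (hlnd : IsLND δ) (m : Fin n → ℤ) (hm : m ∈ P) {k : ℕ}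
    (h : (δ.toLinearMap ^ k) (chiP K n P m hm) = 0) : Ndeg δ hlnd m hm ≤ k :=
  @Nat.find_le k (fun k => (δ.toLinearMap ^ k) (chiP K n P m hm) = 0)
    (Classical.decPred _) (hlnd _) h

lemma le_Ndeg (hlnd : IsLND δ) (m : Fin n → ℤ) (hm : m ∈ P) {k : ℕ}
    (h : ∀ j < k, (δ.toLinearMap ^ j) (chiP K n P m hm) ≠ 0) : k ≤ Ndeg δ hlnd m hm :=
  (@Nat.le_find_iff (fun k => (δ.toLinearMap ^ k) (chiP K n P m hm) = 0)
    (Classical.decPred _) (hlnd _) k).mpr (fun j hj => h j hj)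

lemma Ndeg_succ (hhom : IsHomog K n P δ e) (hlnd : IsLND δ) (m : Fin n → ℤ) (hm : m ∈ P)
    (h : cdeg δ hhom m hm ≠ 0) :
    Ndeg δ hlnd m hm = Ndeg δ hlnd (m + e) (mem_of_cdeg_ne δ hhom m hm h) + 1 := by
  have hme := mem_of_cdeg_ne δ hhom m hm h
  have key : ∀ k : ℕ, (δ.toLinearMap ^ (k+1)) (chiP K n P m hm)
      = cdeg δ hhom m hm • (δ.toLinearMap ^ k) (chiP K n P (m+e) hme) := by
    intro k
    rw [pow_succ_apply]
    rw [deriv_chiP_eq δ hhom m hm h]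
    rw [map_smul]
  apply le_antisymm
  · apply Ndeg_le
    rw [key]
    rw [Ndeg_spec δ hlnd (m+e) hme, smul_zero]
  · apply le_Ndeg
    intro k hk
    rcases Nat.eq_zero_or_pos k with rfl | hkpos
    · rw [pow_zero]
      exact fun h0 => chiP_ne_zero m hm (by simpa using h0)
    · obtain ⟨j, rfl⟩ := Nat.exists_eq_add_of_lt hkpos
      rw [zero_add] at *
      rw [key j]
      intro h0
      rcases smul_eq_zero.mp h0 with h1 | h1
      · exact h h1
      · exact Ndeg_min δ hlnd (m+e) hme (by omega) h1

lemma Ndeg_one (hhom : IsHomog K n P δ e) (hlnd : IsLND δ) (m : Fin n → ℤ) (hm : m ∈ P)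
    (h : cdeg δ hhom m hm = 0) : Ndeg δ hlnd m hm = 1 := by
  apply le_antisymm
  · apply Ndeg_le
    rw [pow_one]
    exact deriv_chiP_zero δ hhom m hm h
  · exact Ndeg_pos δ hlnd m hm

/-- the main relation: `c_m = u(m) · c_{-e}` -/
lemma cdeg_eq_udeg_mul (hhom : IsHomog K n P δ e) (hlnd : IsLND δ) (hr : -e ∈ P) :
    ∀ (N : ℕ) (m : Fin n → ℤ) (hm : m ∈ P), Ndeg δ hlnd m hm ≤ N →
      cdeg δ hhom m hm = (udeg δ hlnd m hm : K) * cdeg δ hhom (-e) hr := by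
  intro N
  induction N with
  | zero => intro m hm h; exact absurd h (by have := Ndeg_pos δ hlnd m hm; omega)
  | succ N ih =>
    intro m hm h
    by_cases hc : cdeg δ hhom m hm = 0
    · rw [hc, udeg, Ndeg_one δ hhom hlnd m hm hc]
      norm_num
    · have hme := mem_of_cdeg_ne δ hhom m hm hc
      have hNs := Ndeg_succ δ hhom hlnd m hm hc
      have hIH := ih (m + e) hme (by omega)
      -- additivity : cdeg m = cdeg (m+e) + cdeg (-e)
      have hadd : cdeg δ hhom m hm
          = cdeg δ hhom (m+e) hme + cdeg δ hhom (-e) hr := by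
        have h1 := cdeg_add δ hhom (m+e) (-e) hme hr
        have h2 : cdeg δ hhom (m + e + -e) (P.add_mem hme hr) = cdeg δ hhom m hm :=
          cdeg_congr δ hhom _ _ (by abel)
        rw [← h2, h1]
      rw [hadd, hIH]
      have hu : udeg δ hlnd m hm = udeg δ hlnd (m+e) hme + 1 := by
        have := Ndeg_pos δ hlnd (m+e) hme
        unfold udeg
        omega
      rw [hu]
      push_cast
      ring

/-- the slice forces `-e ∈ P` with nonzero coefficient -/
lemma slice_root (hhom : IsHomog K n P δ e) (hsl : HasSlice δ) :
    ∃ h : -e ∈ P, cdeg δ hhom (-e) h ≠ 0 := by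
  classical
  obtain ⟨s, hs⟩ := hsl
  by_contra hcon
  push_neg at hcon
  have hexp := monAlg_eq_sum s
  have hds : δ s = ∑ m ∈ (s : Laurent K n).coeff.support.attach,
      ((s : Laurent K n).coeff m.1) • δ (chiP K n P m.1 (s.2 m.1 m.2)) := by
    conv_lhs => rw [hexp]
    rw [map_sum]
    apply Finset.sum_congr rfl
    intro m _
    rw [Derivation.map_smul]
  rw [hs] at hds
  have hval := congrArg (fun x : monAlg K n P => (x : Laurent K n)) hds
  simp only [AddSubmonoidClass.coe_finset_sum, SetLike.val_smul] at hval
  have hval2 : ((1 : monAlg K n P) : Laurent K n)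
      = ∑ x ∈ (s : Laurent K n).coeff.support.attach,
        AddMonoidAlgebra.single (x.1 + e) ((s : Laurent K n).coeff x.1 * cdeg δ hhom x.1 (s.2 x.1 x.2)) := by
    rw [hval]
    apply Finset.sum_congr rfl
    intro x _
    rw [cdeg_spec δ hhom x.1 (s.2 x.1 x.2)]
    exact AddMonoidAlgebra.smul_single' _ _ _
  have h0 := congrArg (fun f : Laurent K n =>
    Finsupp.applyAddHom (M := K) (0 : Fin n → ℤ) (AddMonoidAlgebra.coeffAddEquiv f)) hval2
  simp only [map_sum] at h0
  have hL : Finsupp.applyAddHom (M := K) (0 : Fin n → ℤ) (AddMonoidAlgebra.coeffAddEquiv ((1 : monAlg K n P) : Laurent K n))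
      = 1 := by
    show (Finsupp.single (0 : Fin n → ℤ) (1:K)) 0 = 1
    exact Finsupp.single_eq_same
  rw [hL] at h0
  have hzero : ∀ x ∈ (s : Laurent K n).coeff.support.attach,
      Finsupp.applyAddHom (M := K) (0 : Fin n → ℤ)
        (AddMonoidAlgebra.coeffAddEquiv (AddMonoidAlgebra.single (x.1 + e) ((s : Laurent K n).coeff x.1 * cdeg δ hhom x.1 (s.2 x.1 x.2)))) = 0 := by
    intro x _
    show (Finsupp.single (x.1 + e) ((s : Laurent K n).coeff x.1 * cdeg δ hhom x.1 (s.2 x.1 x.2))) 0 = 0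
    rw [Finsupp.single_apply]
    by_cases hm0 : x.1 + e = 0
    · have hmeq : x.1 = -e := eq_neg_of_add_eq_zero_left hm0
      have hmem : -e ∈ P := hmeq ▸ s.2 x.1 x.2
      have hc0 : cdeg δ hhom x.1 (s.2 x.1 x.2) = 0 := by
        rw [cdeg_congr δ hhom (s.2 x.1 x.2) hmem hmeq]
        exact hcon hmem
      rw [if_pos hm0, hc0, mul_zero]
    · rw [if_neg hm0]
  rw [Finset.sum_eq_zero hzero] at h0
  exact one_ne_zero h0

end DerivAnalysis


section Pairs
variable {K : Type} [Field K] [CharZero K] {n : ℕ} {P : AddSubmonoid (Fin n → ℤ)}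

lemma exists_pair (hML : MLstarhAlg K n P = ⊥)
    (m₀ : Fin n → ℤ) (hm₀ : m₀ ∈ P) (h0 : m₀ ≠ 0) :
    ∃ (r : Fin n → ℤ) (U : (Fin n → ℤ) → ℕ), r ∈ P ∧ r ≠ 0 ∧
      (∀ m ∈ P, ∀ m' ∈ P, U (m + m') = U m + U m') ∧ U r = 1 ∧
      (∀ m ∈ P, 0 < U m → m - r ∈ P) ∧ 0 < U m₀ := by
  classical
  have hnot : chiP K n P m₀ hm₀ ∉ MLstarh K n P := by
    intro hmem
    have hmem2 : chiP K n P m₀ hm₀ ∈ MLstarhAlg K n P := hmem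
    rw [hML] at hmem2
    exact chiP_not_bot hm₀ h0 hmem2
  rw [MLstarh, Set.mem_setOf_eq] at hnot
  push_neg at hnot
  obtain ⟨δ, hlnd, hsl, ⟨e, hhom⟩, hne⟩ := hnot
  obtain ⟨hr, hcr⟩ := slice_root δ hhom hsl
  have crel : ∀ (m : Fin n → ℤ) (hm : m ∈ P),
      cdeg δ hhom m hm = (udeg δ hlnd m hm : K) * cdeg δ hhom (-e) hr :=
    fun m hm => cdeg_eq_udeg_mul δ hhom hlnd hr (Ndeg δ hlnd m hm) m hm le_rfl
  have udeg0 : udeg δ hlnd 0 P.zero_mem = 0 := by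
    have h1 := crel 0 P.zero_mem
    rw [cdeg_zero] at h1
    have h2 : (udeg δ hlnd 0 P.zero_mem : K) = 0 :=
      (mul_eq_zero.mp h1.symm).resolve_right hcr
    exact_mod_cast h2
  have udegr : udeg δ hlnd (-e) hr = 1 := by
    have h1 := crel (-e) hr
    have h2 : (1 : K) * cdeg δ hhom (-e) hr
        = (udeg δ hlnd (-e) hr : K) * cdeg δ hhom (-e) hr := by
      rw [one_mul, ← h1]
    have h3 := mul_right_cancel₀ hcr h2
    exact_mod_cast h3.symm
  refine ⟨-e, fun m => if h : m ∈ P then udeg δ hlnd m h else 0, hr, ?_, ?_, ?_, ?_, ?_⟩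
  · intro hre
    have h1 : udeg δ hlnd (-e) hr = udeg δ hlnd 0 P.zero_mem := by
      congr 1
    rw [udegr, udeg0] at h1
    exact one_ne_zero h1
  · intro m hm m' hm'
    dsimp only
    rw [dif_pos hm, dif_pos hm', dif_pos (P.add_mem hm hm')]
    have h1 := crel (m + m') (P.add_mem hm hm')
    rw [cdeg_add δ hhom m m' hm hm', crel m hm, crel m' hm', ← add_mul] at h1
    have h2 := mul_right_cancel₀ hcr h1
    exact_mod_cast h2.symm
  · dsimp only
    rw [dif_pos hr]; exact udegr
  · intro m hm hU
    dsimp only at hU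
    rw [dif_pos hm] at hU
    have hcne : cdeg δ hhom m hm ≠ 0 := by
      rw [crel m hm]
      exact mul_ne_zero (Nat.cast_ne_zero.mpr (by omega)) hcr
    have := mem_of_cdeg_ne δ hhom m hm hcne
    rwa [sub_neg_eq_add]
  · dsimp only
    rw [dif_pos hm₀]
    by_contra hU
    push_neg at hU
    have hU0 : udeg δ hlnd m₀ hm₀ = 0 := by omega
    have hc0 : cdeg δ hhom m₀ hm₀ = 0 := by
      rw [crel m₀ hm₀, hU0]
      norm_num
    exact hne (deriv_chiP_zero δ hhom m₀ hm₀ hc0)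

end Pairs

section BMain
variable {K : Type} [Field K] [CharZero K] {n : ℕ} {P : AddSubmonoid (Fin n → ℤ)}

lemma U_zero {U : (Fin n → ℤ) → ℕ}
    (hadd : ∀ m ∈ P, ∀ m' ∈ P, U (m + m') = U m + U m') : U 0 = 0 := by
  have h := hadd 0 P.zero_mem 0 P.zero_mem
  rw [add_zero] at h
  omega

lemma U_nsmul {U : (Fin n → ℤ) → ℕ}
    (hadd : ∀ m ∈ P, ∀ m' ∈ P, U (m + m') = U m + U m')
    (m : Fin n → ℤ) (hm : m ∈ P) (k : ℕ) : U (k • m) = k * U m := by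
  induction k with
  | zero => rw [zero_smul, zero_mul]; exact U_zero hadd
  | succ k ih =>
    rw [succ_nsmul, hadd _ (P.nsmul_mem hm k) _ hm, ih]
    ring

lemma U_finsum {U : (Fin n → ℤ) → ℕ}
    (hadd : ∀ m ∈ P, ∀ m' ∈ P, U (m + m') = U m + U m')
    {ι : Type*} [DecidableEq ι] (F : Finset ι) (v : ι → Fin n → ℤ)
    (hv : ∀ i ∈ F, v i ∈ P) (k : ι → ℕ) :
    U (∑ i ∈ F, k i • v i) = ∑ i ∈ F, k i * U (v i) := by
  induction F using Finset.induction with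
  | empty => simp [U_zero hadd]
  | insert _ _ hnew ih =>
    rename_i a F
    rw [Finset.sum_insert hnew, Finset.sum_insert hnew]
    rw [hadd _ (P.nsmul_mem (hv a (Finset.mem_insert_self a F)) _) _
      (AddSubmonoid.sum_mem _ (fun i hi => P.nsmul_mem (hv i (Finset.mem_insert_of_mem hi)) _))]
    rw [U_nsmul hadd _ (hv a (Finset.mem_insert_self a F))]
    rw [ih (fun i hi => hv i (Finset.mem_insert_of_mem hi))]

lemma freeOn_of_ML (hML : MLstarhAlg K n P = ⊥) (hfg : P.FG)
    (hgen : AddSubgroup.closure (P : Set (Fin n → ℤ)) = ⊤)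
    (hptP : ∀ p ∈ P, -p ∈ P → p = 0) : FreeOn n P := by
  classical
  obtain ⟨G, hG0, hGcl, hmin⟩ := exists_minimal_genset hfg
  have hatoms := minimal_genset_atoms hptP G hG0 hGcl hmin
  have hGP : ∀ g ∈ G, g ∈ P := fun g hg => (hatoms g hg).1
  have hpairs : ∀ g : ↥G, ∃ (r : Fin n → ℤ) (U : (Fin n → ℤ) → ℕ), r ∈ P ∧ r ≠ 0 ∧
      (∀ m ∈ P, ∀ m' ∈ P, U (m + m') = U m + U m') ∧ U r = 1 ∧
      (∀ m ∈ P, 0 < U m → m - r ∈ P) ∧ 0 < U (g : Fin n → ℤ) :=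
    fun g => exists_pair hML g (hGP g g.2) (hatoms g g.2).2.1
  choose r U hrP hrne hUadd hUr hUmove hUpos using hpairs
  -- each r g equals g
  have hrg : ∀ g : ↥G, r g = (g : Fin n → ℤ) := by
    intro g
    have hsub : (g : Fin n → ℤ) - r g ∈ P := hUmove g _ (hGP g g.2) (hUpos g)
    have hdec := (hatoms g g.2).2.2 (r g) (hrP g) ((g : Fin n → ℤ) - r g) hsub (by abel)
    rcases hdec with h | h
    · exact absurd h (hrne g)
    · have := sub_eq_zero.mp h
      exact this.symm
  have hUgg : ∀ g : ↥G, U g (g : Fin n → ℤ) = 1 := by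
    intro g
    have := hUr g
    rwa [hrg g] at this
  have hUgg' : ∀ g g' : ↥G, g ≠ g' → U g (g' : Fin n → ℤ) = 0 := by
    intro g g' hne
    by_contra hUne
    have hpos : 0 < U g (g' : Fin n → ℤ) := Nat.pos_of_ne_zero hUne
    have hsub : (g' : Fin n → ℤ) - r g ∈ P := hUmove g _ (hGP g' g'.2) hpos
    rw [hrg g] at hsub
    have hdec := (hatoms g' g'.2).2.2 (g : Fin n → ℤ) (hGP g g.2)
      ((g' : Fin n → ℤ) - (g : Fin n → ℤ)) hsub (by abel)
    rcases hdec with h | h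
    · exact (hatoms g g.2).2.1 h
    · have h2 := sub_eq_zero.mp h
      exact hne (Subtype.ext h2.symm)
  -- linear independence over ℤ
  have hindZ : LinearIndependent ℤ (fun g : ↥G => (g : Fin n → ℤ)) := by
    rw [Fintype.linearIndependent_iff]
    intro z hz b
    set T : Fin n → ℤ := ∑ a : ↥G, (z a).toNat • (a : Fin n → ℤ) with hT
    set T' : Fin n → ℤ := ∑ a : ↥G, (-(z a)).toNat • (a : Fin n → ℤ) with hT'
    have hTT' : T = T' := by
      have hsub : T - T' = 0 := by
        rw [hT, hT', ← Finset.sum_sub_distrib]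
        rw [← hz]
        apply Finset.sum_congr rfl
        intro a _
        rw [← natCast_zsmul, ← natCast_zsmul, ← sub_smul, Int.toNat_sub_toNat_neg]
      exact sub_eq_zero.mp hsub
    have hUT : U b T = (z b).toNat := by
      rw [hT, U_finsum (hUadd b) (Finset.univ : Finset ↥G)
        (fun a : ↥G => (a : Fin n → ℤ)) (fun a _ => hGP a a.2) (fun a => (z a).toNat)]
      rw [Finset.sum_eq_single b]
      · rw [hUgg b, mul_one]
      · intro a _ hab
        rw [hUgg' b a (Ne.symm hab), mul_zero]
      · intro h; exact absurd (Finset.mem_univ b) h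
    have hUT' : U b T' = (-(z b)).toNat := by
      rw [hT', U_finsum (hUadd b) (Finset.univ : Finset ↥G)
        (fun a : ↥G => (a : Fin n → ℤ)) (fun a _ => hGP a a.2) (fun a => (-(z a)).toNat)]
      rw [Finset.sum_eq_single b]
      · rw [hUgg b, mul_one]
      · intro a _ hab
        rw [hUgg' b a (Ne.symm hab), mul_zero]
      · intro h; exact absurd (Finset.mem_univ b) h
    have : (z b).toNat = (-(z b)).toNat := by rw [← hUT, ← hUT', hTT']
    omega
  have hcard : G.card ≤ n := by
    have h1 := hindZ.fintype_card_le_finrank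
    rw [Module.finrank_fin_fun ℤ] at h1
    rwa [Fintype.card_coe] at h1
  exact freeOn_of_card_le hgen G hGcl hcard

end BMain

section IsoConstr
variable {K : Type} [Field K] {n : ℕ} {P : AddSubmonoid (Fin n → ℤ)}

def iotaB (b : Fin n → (Fin n → ℤ)) (d : Fin n →₀ ℕ) : Fin n → ℤ :=
  d.sum fun i e => e • b i

lemma iotaB_add (b : Fin n → (Fin n → ℤ)) (c d : Fin n →₀ ℕ) :
    iotaB b (c + d) = iotaB b c + iotaB b d :=
  Finsupp.sum_add_index' (fun a => zero_smul ℕ (b a)) (fun a e1 e2 => add_smul e1 e2 (b a))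

lemma iotaB_single_one (b : Fin n → (Fin n → ℤ)) (i : Fin n) :
    iotaB b (Finsupp.single i 1) = b i := by
  unfold iotaB
  rw [Finsupp.sum_single_index (zero_smul ℕ (b i))]
  exact one_smul ℕ (b i)

lemma iotaB_mem (b : Fin n → (Fin n → ℤ)) (hbP : ∀ i, b i ∈ P) (d : Fin n →₀ ℕ) :
    iotaB b d ∈ P :=
  AddSubmonoid.sum_mem _ (fun i _ => P.nsmul_mem (hbP i) _)

lemma iotaB_fintype_sum (b : Fin n → (Fin n → ℤ)) (d : Fin n →₀ ℕ) :
    iotaB b d = ∑ i, (d i) • b i :=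
  Finsupp.sum_fintype d _ (fun i => zero_smul ℕ (b i))

lemma iotaB_inj (b : Fin n → (Fin n → ℤ)) (hind : LinearIndependent ℤ b) :
    Function.Injective (iotaB b) := by
  intro d d' h
  rw [iotaB_fintype_sum, iotaB_fintype_sum] at h
  have hz : ∑ i, ((d i : ℤ) - (d' i : ℤ)) • b i = 0 := by
    have : ∑ i, ((d i : ℤ) - (d' i : ℤ)) • b i
        = ∑ i, (d i) • b i - ∑ i, (d' i) • b i := by
      rw [← Finset.sum_sub_distrib]
      apply Finset.sum_congr rfl
      intro i _
      rw [sub_smul, natCast_zsmul, natCast_zsmul]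
    rw [this, h, sub_self]
  have hcoef := Fintype.linearIndependent_iff.mp hind _ hz
  ext i
  have := hcoef i
  omega

lemma val_smul_chiP (c : K) (m : Fin n → ℤ) (hm : m ∈ P) :
    ((c • chiP K n P m hm : monAlg K n P) : Laurent K n) = AddMonoidAlgebra.single m c := by
  show c • (AddMonoidAlgebra.single m (1:K)) = _
  rw [AddMonoidAlgebra.smul_single', mul_one]

lemma chiP_congr {m m' : Fin n → ℤ} (hm : m ∈ P) (hm' : m' ∈ P) (h : m = m') :
    chiP K n P m hm = chiP K n P m' hm' := by subst h; rfl

lemma exists_coordsB (b : Fin n → (Fin n → ℤ))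
    (hP : AddSubmonoid.closure (Set.range b) = P) :
    ∀ m ∈ P, ∃ d : Fin n →₀ ℕ, m = iotaB b d := by
  intro m hm
  rw [← hP] at hm
  induction hm using AddSubmonoid.closure_induction with
  | mem w hw =>
    obtain ⟨i, rfl⟩ := hw
    exact ⟨Finsupp.single i 1, (iotaB_single_one b i).symm⟩
  | zero => exact ⟨0, by unfold iotaB; rw [Finsupp.sum_zero_index]⟩
  | add x y hx hy ihx ihy =>
    obtain ⟨c, rfl⟩ := ihx
    obtain ⟨d, rfl⟩ := ihy
    exact ⟨c + d, (iotaB_add b c d).symm⟩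

def phiB (b : Fin n → (Fin n → ℤ)) (hbP : ∀ i, b i ∈ P) :
    MvPolynomial (Fin n) K →ₐ[K] monAlg K n P :=
  MvPolynomial.aeval (fun i => chiP K n P (b i) (hbP i))

lemma phiB_monomial (b : Fin n → (Fin n → ℤ)) (hbP : ∀ i, b i ∈ P)
    (d : Fin n →₀ ℕ) (c : K) :
    phiB b hbP (MvPolynomial.monomial d c)
      = c • chiP K n P (iotaB b d) (iotaB_mem b hbP d) := by
  unfold phiB
  rw [MvPolynomial.aeval_monomial]
  have hprod : (d.prod fun i k => chiP K n P (b i) (hbP i) ^ k)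
      = chiP K n P (iotaB b d) (iotaB_mem b hbP d) := by
    apply Subtype.ext
    show ((d.prod fun i k => chiP K n P (b i) (hbP i) ^ k : monAlg K n P) : Laurent K n)
      = AddMonoidAlgebra.single (iotaB b d) 1
    unfold Finsupp.prod
    rw [SubmonoidClass.coe_finset_prod]
    have : ∀ i ∈ d.support,
        ((chiP K n P (b i) (hbP i) ^ d i : monAlg K n P) : Laurent K n)
          = AddMonoidAlgebra.single ((d i) • b i) 1 := by
      intro i _
      rw [chiP_pow]
      rfl
    rw [Finset.prod_congr rfl this]
    rw [AddMonoidAlgebra.prod_single]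
    rw [Finset.prod_const_one]
    rfl
  rw [hprod, Algebra.smul_def]

lemma val_phiB (b : Fin n → (Fin n → ℤ)) (hbP : ∀ i, b i ∈ P) (p : MvPolynomial (Fin n) K) :
    ((phiB b hbP p : monAlg K n P) : Laurent K n)
      = AddMonoidAlgebra.mapDomain (iotaB b) p := by
  induction p using MvPolynomial.induction_on' with
  | monomial d c =>
    rw [phiB_monomial]
    rw [← MvPolynomial.single_eq_monomial]
    show ((c • chiP K n P (iotaB b d) (iotaB_mem b hbP d) : monAlg K n P) : Laurent K n) = _
    rw [AddMonoidAlgebra.mapDomain_single]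
    show c • ((chiP K n P (iotaB b d) (iotaB_mem b hbP d) : monAlg K n P) : Laurent K n) = _
    rw [val_chiP, AddMonoidAlgebra.smul_single', mul_one]
  | add p q ihp ihq =>
    rw [map_add]
    show ((phiB b hbP p : monAlg K n P) : Laurent K n)
      + ((phiB b hbP q : monAlg K n P) : Laurent K n) = _
    rw [ihp, ihq, ← AddMonoidAlgebra.mapDomain_add]

lemma phiB_inj (b : Fin n → (Fin n → ℤ)) (hbP : ∀ i, b i ∈ P)
    (hind : LinearIndependent ℤ b) : Function.Injective (phiB b hbP (K := K)) := by
  intro p q h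
  have hval : AddMonoidAlgebra.mapDomain (iotaB b) p = AddMonoidAlgebra.mapDomain (iotaB b) q := by
    rw [← val_phiB b hbP p, ← val_phiB b hbP q, h]
  exact AddMonoidAlgebra.mapDomain_injective (iotaB_inj b hind) hval

lemma phiB_surj (b : Fin n → (Fin n → ℤ)) (hbP : ∀ i, b i ∈ P)
    (hP : AddSubmonoid.closure (Set.range b) = P) :
    Function.Surjective (phiB b hbP (K := K)) := by
  intro f
  have hmem : f ∈ (phiB b hbP (K := K)).range := by
    rw [monAlg_eq_sum f]
    apply Subalgebra.sum_mem
    intro m _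
    apply Subalgebra.smul_mem
    obtain ⟨d, hd⟩ := exists_coordsB b hP m.1 (f.2 m.1 m.2)
    refine ⟨MvPolynomial.monomial d 1, ?_⟩
    show (phiB b hbP) (MvPolynomial.monomial d 1) = _
    rw [phiB_monomial, one_smul]
    exact chiP_congr _ _ hd.symm
  exact hmem

lemma freeOn_iso (hfree : FreeOn n P) :
    Nonempty (↥(monAlg K n P) ≃ₐ[K] MvPolynomial (Fin n) K) := by
  obtain ⟨b, hind, hspan, hP⟩ := hfree
  have hbP : ∀ i, b i ∈ P := fun i => by
    rw [← hP]; exact AddSubmonoid.subset_closure ⟨i, rfl⟩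
  exact ⟨(AlgEquiv.ofBijective (phiB b hbP)
    ⟨phiB_inj b hbP hind, phiB_surj b hbP hP⟩).symm⟩

end IsoConstr

section Dside
variable {K : Type} [Field K] [CharZero K] {n : ℕ} {P : AddSubmonoid (Fin n → ℤ)}

open MvPolynomial in
lemma coeff_pderiv' (i : Fin n) (p : MvPolynomial (Fin n) K) (m : Fin n →₀ ℕ) :
    coeff m (pderiv i p)
      = ((m i : K) + 1) * coeff (m + Finsupp.single i 1) p := by
  induction p using MvPolynomial.induction_on' with
  | monomial d c =>
    rw [pderiv_monomial, coeff_monomial, coeff_monomial]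
    by_cases hd : d = m + Finsupp.single i 1
    · subst hd
      rw [if_pos (add_tsub_cancel_right m (Finsupp.single i 1)), if_pos rfl]
      have hdi : (m + (Finsupp.single i 1 : Fin n →₀ ℕ)) i = m i + 1 := by
        rw [Finsupp.add_apply, Finsupp.single_eq_same]
      rw [hdi]
      push_cast
      ring
    · rw [if_neg hd]
      by_cases h2 : d - Finsupp.single i 1 = m
      · rw [if_pos h2]
        have hdi : d i = 0 := by
          by_contra h3
          have hle : Finsupp.single i 1 ≤ d := by
            rw [Finsupp.single_le_iff]; omega
          have h4 := tsub_add_cancel_of_le hle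
          rw [h2] at h4
          exact hd h4.symm
        rw [hdi]
        norm_num
      · rw [if_neg h2, mul_zero]
  | add p q ihp ihq =>
    rw [map_add, MvPolynomial.coeff_add, MvPolynomial.coeff_add, ihp, ihq]
    ring

lemma der_pow_succ_apply {A : Type*} [CommRing A] [Algebra K A]
    (d : Derivation K A A) (k : ℕ) (x : A) :
    (d.toLinearMap ^ (k+1)) x = (d.toLinearMap ^ k) (d x) := by
  rw [pow_succ, Module.End.mul_apply]
  rfl

open MvPolynomial in
lemma pderiv_degree_dec (i : Fin n) (p : MvPolynomial (Fin n) K) (D : ℕ)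
    (h : degreeOf i p ≤ D + 1) : degreeOf i (pderiv i p) ≤ D := by
  rw [degreeOf_le_iff]
  intro m hm
  by_contra h3
  have hc : coeff m (pderiv i p) ≠ 0 := MvPolynomial.mem_support_iff.mp hm
  rw [coeff_pderiv'] at hc
  have hc2 : coeff (m + Finsupp.single i 1) p ≠ 0 := by
    intro h4; rw [h4, mul_zero] at hc; exact hc rfl
  have h5 := degreeOf_le_iff.mp h _ (MvPolynomial.mem_support_iff.mpr hc2)
  rw [Finsupp.add_apply, Finsupp.single_eq_same] at h5
  omega

open MvPolynomial in
lemma pderiv_pow_zero (i : Fin n) :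
    ∀ (D : ℕ) (p : MvPolynomial (Fin n) K), degreeOf i p ≤ D →
      (((pderiv i : Derivation K (MvPolynomial (Fin n) K) _).toLinearMap) ^ (D+1)) p = 0 := by
  intro D
  induction D with
  | zero =>
    intro p hp
    rw [pow_one]
    show pderiv i p = 0
    apply MvPolynomial.ext
    intro m
    rw [coeff_pderiv', MvPolynomial.coeff_zero]
    have : coeff (m + Finsupp.single i 1) p = 0 := by
      by_contra h2
      have h3 := degreeOf_le_iff.mp hp _ (MvPolynomial.mem_support_iff.mpr h2)
      rw [Finsupp.add_apply, Finsupp.single_eq_same] at h3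
      omega
    rw [this, mul_zero]
  | succ D ih =>
    intro p hp
    rw [der_pow_succ_apply]
    exact ih _ (pderiv_degree_dec i p D hp)

open MvPolynomial in
lemma pderiv_lnd (i : Fin n) :
    IsLND (pderiv i : Derivation K (MvPolynomial (Fin n) K) _) :=
  fun p => ⟨degreeOf i p + 1, pderiv_pow_zero i _ p le_rfl⟩

open MvPolynomial in
lemma eq_C_of_pderiv_zero (p : MvPolynomial (Fin n) K)
    (h : ∀ i, pderiv i p = 0) : p = C (coeff 0 p) := by
  apply MvPolynomial.ext
  intro m
  rw [coeff_C]
  by_cases hm : (0 : Fin n →₀ ℕ) = m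
  · rw [if_pos hm, ← hm]
  · rw [if_neg hm]
    have hne : m ≠ 0 := fun h2 => hm h2.symm
    obtain ⟨i, hi⟩ := Finsupp.ne_iff.mp hne
    rw [Finsupp.coe_zero, Pi.zero_apply] at hi
    have h2 := congrArg (coeff (m - Finsupp.single i 1)) (h i)
    rw [coeff_pderiv', MvPolynomial.coeff_zero] at h2
    have hle : Finsupp.single i 1 ≤ m := by
      rw [Finsupp.single_le_iff]; omega
    rw [tsub_add_cancel_of_le hle] at h2
    have h3 : (((m - (Finsupp.single i 1 : Fin n →₀ ℕ)) i : K)) + 1 ≠ 0 := by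
      have heq : (((m - (Finsupp.single i 1 : Fin n →₀ ℕ)) i : K)) + 1
          = (((m - (Finsupp.single i 1 : Fin n →₀ ℕ)) i + 1 : ℕ) : K) := by
        push_cast; ring
      rw [heq]
      exact Nat.cast_ne_zero.mpr (Nat.succ_ne_zero _)
    rcases mul_eq_zero.mp h2 with h4 | h4
    · exact absurd h4 h3
    · exact h4

/-- transport of a derivation along an algebra equivalence -/
def transDer {A B : Type*} [CommRing A] [CommRing B] [Algebra K A] [Algebra K B]
    (e : B ≃ₐ[K] A) (d : Derivation K B B) : Derivation K A A where
  toLinearMap := (e.toLinearEquiv.toLinearMap.comp d.toLinearMap).comp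
    e.symm.toLinearEquiv.toLinearMap
  map_one_eq_zero' := by
    show e (d (e.symm 1)) = 0
    rw [map_one, Derivation.map_one_eq_zero, map_zero]
  leibniz' := fun a b => by
    show e (d (e.symm (a * b))) = a • (e (d (e.symm b))) + b • (e (d (e.symm a)))
    rw [map_mul, Derivation.leibniz]
    rw [map_add]
    simp only [smul_eq_mul, map_mul, AlgEquiv.apply_symm_apply]

lemma transDer_apply {A B : Type*} [CommRing A] [CommRing B] [Algebra K A] [Algebra K B]
    (e : B ≃ₐ[K] A) (d : Derivation K B B) (x : A) :
    transDer e d x = e (d (e.symm x)) := rfl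

lemma transDer_pow {A B : Type*} [CommRing A] [CommRing B] [Algebra K A] [Algebra K B]
    (e : B ≃ₐ[K] A) (d : Derivation K B B) :
    ∀ (k : ℕ) (x : A), ((transDer e d).toLinearMap ^ k) x
      = e ((d.toLinearMap ^ k) (e.symm x)) := by
  intro k
  induction k with
  | zero => intro x; rw [pow_zero, pow_zero]; exact (e.apply_symm_apply x).symm
  | succ k ih =>
    intro x
    rw [der_pow_succ_apply, der_pow_succ_apply, ih (transDer e d x),
      transDer_apply, AlgEquiv.symm_apply_apply]

lemma transDer_lnd {A B : Type*} [CommRing A] [CommRing B] [Algebra K A] [Algebra K B]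
    (e : B ≃ₐ[K] A) (d : Derivation K B B) (hd : IsLND d) : IsLND (transDer e d) := by
  intro x
  obtain ⟨k, hk⟩ := hd (e.symm x)
  exact ⟨k, by rw [transDer_pow, hk, map_zero]⟩

lemma transDer_slice {A B : Type*} [CommRing A] [CommRing B] [Algebra K A] [Algebra K B]
    (e : B ≃ₐ[K] A) (d : Derivation K B B) (hd : HasSlice d) : HasSlice (transDer e d) := by
  obtain ⟨s, hs⟩ := hd
  exact ⟨e s, by rw [transDer_apply, AlgEquiv.symm_apply_apply, hs, map_one]⟩

open MvPolynomial in
lemma ML_of_freeOn (hfree : FreeOn n P) : MLstarhAlg K n P = ⊥ := by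
  obtain ⟨b, hind, hspan, hP⟩ := hfree
  have hbP : ∀ i, b i ∈ P := fun i => by
    rw [← hP]; exact AddSubmonoid.subset_closure ⟨i, rfl⟩
  set φe : MvPolynomial (Fin n) K ≃ₐ[K] monAlg K n P :=
    AlgEquiv.ofBijective (phiB b hbP) ⟨phiB_inj b hbP hind, phiB_surj b hbP hP⟩ with hφe
  have hφe_apply : ∀ p, φe p = phiB b hbP p := fun p => rfl
  -- the transported derivations
  set δ : Fin n → Derivation K (monAlg K n P) (monAlg K n P) :=
    fun i => transDer φe (pderiv i) with hδdef
  have hlnd : ∀ i, IsLND (δ i) := fun i => transDer_lnd φe _ (pderiv_lnd i)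
  have hslice : ∀ i, HasSlice (δ i) := fun i =>
    transDer_slice φe _ ⟨X i, pderiv_X_self i⟩
  have hhomog : ∀ i, IsHomog K n P (δ i) (-(b i)) := by
    intro i m hm
    obtain ⟨d, hd⟩ := exists_coordsB b hP m hm
    have hsymm : φe.symm (chiP K n P m hm) = monomial d 1 := by
      rw [AlgEquiv.symm_apply_eq, hφe_apply, phiB_monomial, one_smul]
      exact chiP_congr _ _ hd
    have happ : δ i (chiP K n P m hm) = φe (monomial (d - Finsupp.single i 1) ((1:K) * (d i : K))) := by
      rw [hδdef]
      dsimp only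
      rw [transDer_apply, hsymm, pderiv_monomial]
    by_cases hdi : d i = 0
    · refine ⟨0, ?_⟩
      rw [AddMonoidAlgebra.single_zero]
      rw [happ, hdi]
      norm_num
    · refine ⟨(d i : K), ?_⟩
      rw [happ, one_mul, hφe_apply, phiB_monomial]
      have hidx : iotaB b (d - Finsupp.single i 1) = m + -(b i) := by
        have hle : Finsupp.single i 1 ≤ d := by
          rw [Finsupp.single_le_iff]; omega
        have h1 : iotaB b (d - Finsupp.single i 1) + b i = m := by
          rw [← iotaB_single_one b i, ← iotaB_add, tsub_add_cancel_of_le hle, hd]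
        have := eq_sub_of_add_eq h1
        rw [this, sub_eq_add_neg]
      rw [val_smul_chiP, hidx]
  -- conclude
  apply le_antisymm ?_ bot_le
  intro f hf
  have hfML : f ∈ MLstarh K n P := hf
  have hzero : ∀ i, pderiv i (φe.symm f) = 0 := by
    intro i
    have h1 : δ i f = 0 := hfML (δ i) (hlnd i) (hslice i) ⟨-(b i), hhomog i⟩
    rw [hδdef] at h1
    dsimp only at h1
    rw [transDer_apply] at h1
    have h2 : φe (pderiv i (φe.symm f)) = φe 0 := by rw [h1, map_zero]
    exact φe.injective h2
  have hC : φe.symm f = C (coeff 0 (φe.symm f)) := eq_C_of_pderiv_zero _ hzero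
  have hfC : f = φe (C (coeff 0 (φe.symm f))) := by
    rw [← hC, AlgEquiv.apply_symm_apply]
  rw [Algebra.mem_bot]
  have hcomm : φe (C (coeff 0 (φe.symm f))) = algebraMap K (monAlg K n P) (coeff 0 (φe.symm f)) := by
    rw [hφe_apply]
    exact (phiB b hbP).commutes _
  exact ⟨coeff 0 (φe.symm f), (hfC.trans hcomm).symm⟩

end Dside

section Eside
variable {K : Type} [Field K] {n : ℕ} {P : AddSubmonoid (Fin n → ℤ)}

open scoped Classical in
lemma mul_apply_support (f g : Laurent K n) (t : Fin n → ℤ) :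
    (f * g).coeff t = ∑ x ∈ f.coeff.support, ∑ y ∈ g.coeff.support, if x + y = t then f.coeff x * g.coeff y else 0 := by
  rw [AddMonoidAlgebra.coeff_mul]
  rfl

open scoped Classical in
lemma val_mul_zero (hptP : ∀ p ∈ P, -p ∈ P → p = 0) (f g : monAlg K n P) :
    ((f * g : monAlg K n P) : Laurent K n).coeff 0
      = (f : Laurent K n).coeff 0 * (g : Laurent K n).coeff 0 := by
  have hcoe : ((f * g : monAlg K n P) : Laurent K n)
      = (f : Laurent K n) * (g : Laurent K n) := rfl
  rw [hcoe, mul_apply_support]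
  rw [Finset.sum_eq_single (0 : Fin n → ℤ)]
  · rw [Finset.sum_eq_single (0 : Fin n → ℤ)]
    · rw [if_pos (add_zero (0 : Fin n → ℤ))]
    · intro y hy hy0
      rw [if_neg (by rwa [zero_add])]
    · intro h0
      rw [Finsupp.notMem_support_iff.mp h0, mul_zero, ite_self]
  · intro x hx hx0
    apply Finset.sum_eq_zero
    intro y hy
    have hxP : x ∈ P := f.2 x hx
    have hyP : y ∈ P := g.2 y hy
    rw [if_neg]
    intro hxy
    have h2 : x = -y := eq_neg_of_add_eq_zero_left hxy
    have hyz : y = 0 := hptP y hyP (h2 ▸ hxP)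
    rw [hyz, add_zero] at hxy
    exact hx0 hxy
  · intro h0
    apply Finset.sum_eq_zero
    intro y _
    rw [Finsupp.notMem_support_iff.mp h0, zero_mul, ite_self]

open scoped Classical in
lemma val_mul_atom (hptP : ∀ p ∈ P, -p ∈ P → p = 0) {a : Fin n → ℤ} (ha : IsAtomP P a)
    (f g : monAlg K n P) :
    ((f * g : monAlg K n P) : Laurent K n).coeff a
      = (f : Laurent K n).coeff 0 * (g : Laurent K n).coeff a
        + (f : Laurent K n).coeff a * (g : Laurent K n).coeff 0 := by
  obtain ⟨haP, ha0, hadec⟩ := ha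
  have hcoe : ((f * g : monAlg K n P) : Laurent K n)
      = (f : Laurent K n) * (g : Laurent K n) := rfl
  rw [hcoe, mul_apply_support]
  have hinner : ∀ x ∈ (f : Laurent K n).coeff.support,
      (∑ y ∈ (g : Laurent K n).coeff.support, if x + y = a then (f : Laurent K n).coeff x * (g : Laurent K n).coeff y else 0)
      = (if x = 0 then (f : Laurent K n).coeff 0 * (g : Laurent K n).coeff a else 0)
        + (if x = a then (f : Laurent K n).coeff a * (g : Laurent K n).coeff 0 else 0) := by
    intro x hx
    have hxP : x ∈ P := f.2 x hx
    by_cases hx00 : x = 0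
    · subst hx00
      rw [if_pos rfl, if_neg (Ne.symm ha0)]
      rw [add_zero]
      rw [Finset.sum_eq_single a]
      · rw [if_pos (zero_add a)]
      · intro y hy hya
        rw [if_neg (by rwa [zero_add])]
      · intro h0
        rw [Finsupp.notMem_support_iff.mp h0, mul_zero, ite_self]
    · by_cases hxa : x = a
      · subst hxa
        rw [if_neg hx00, if_pos rfl, zero_add]
        rw [Finset.sum_eq_single (0 : Fin n → ℤ)]
        · rw [if_pos (add_zero x)]
        · intro y hy hy0
          rw [if_neg]
          intro hxy
          have : y = 0 := by
            have := add_left_cancel (a := x) (b := y) (c := 0) (by rw [add_zero]; exact hxy)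
            exact this
          exact hy0 this
        · intro h0
          rw [Finsupp.notMem_support_iff.mp h0, mul_zero, ite_self]
      · rw [if_neg hx00, if_neg hxa, add_zero]
        apply Finset.sum_eq_zero
        intro y hy
        have hyP : y ∈ P := g.2 y hy
        rw [if_neg]
        intro hxy
        rcases hadec x hxP y hyP hxy with h | h
        · exact hx00 h
        · rw [h, add_zero] at hxy
          exact hxa hxy
  rw [Finset.sum_congr rfl hinner]
  rw [Finset.sum_add_distrib]
  congr 1
  · rw [Finset.sum_ite_eq' (f : Laurent K n).coeff.support (0 : Fin n → ℤ)
      (fun _ => (f : Laurent K n).coeff 0 * (g : Laurent K n).coeff a)]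
    by_cases h0 : (0 : Fin n → ℤ) ∈ (f : Laurent K n).coeff.support
    · rw [if_pos h0]
    · rw [if_neg h0, Finsupp.notMem_support_iff.mp h0, zero_mul]
  · rw [Finset.sum_ite_eq' (f : Laurent K n).coeff.support a
      (fun _ => (f : Laurent K n).coeff a * (g : Laurent K n).coeff 0)]
    by_cases h0 : a ∈ (f : Laurent K n).coeff.support
    · rw [if_pos h0]
    · rw [if_neg h0, Finsupp.notMem_support_iff.mp h0, zero_mul]


def epsHom (hptP : ∀ p ∈ P, -p ∈ P → p = 0) : monAlg K n P →ₐ[K] K where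
  toFun f := (f : Laurent K n).coeff 0
  map_one' := by
    show (Finsupp.single (0 : Fin n → ℤ) (1:K)) 0 = 1
    exact Finsupp.single_eq_same
  map_mul' f g := val_mul_zero hptP f g
  map_zero' := rfl
  map_add' f g := rfl
  commutes' c := by
    show (Finsupp.single (0 : Fin n → ℤ) c) 0 = c
    exact Finsupp.single_eq_same

def projLin (a : Fin n → ℤ) : monAlg K n P →ₗ[K] K where
  toFun f := (f : Laurent K n).coeff a
  map_add' f g := rfl
  map_smul' c f := rfl

open MvPolynomial in
lemma card_le_of_iso (hptP : ∀ p ∈ P, -p ∈ P → p = 0)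
    (ψ : ↥(monAlg K n P) ≃ₐ[K] MvPolynomial (Fin n) K)
    (G : Finset (Fin n → ℤ)) (hatoms : ∀ g ∈ G, IsAtomP P g) : G.card ≤ n := by
  classical
  set η : MvPolynomial (Fin n) K →ₐ[K] K := (epsHom hptP).comp ψ.symm.toAlgHom with hη
  set DR : (Fin n → ℤ) → (MvPolynomial (Fin n) K →ₗ[K] K) :=
    fun a => (projLin a).comp ψ.symm.toLinearMap with hDR
  have hηval : ∀ p, η p = ((ψ.symm p : monAlg K n P) : Laurent K n).coeff 0 := fun p => rfl
  have hDRval : ∀ (a : Fin n → ℤ) (p),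
      DR a p = ((ψ.symm p : monAlg K n P) : Laurent K n).coeff a := fun a p => rfl
  have hDRpsi : ∀ (a : Fin n → ℤ) (x : monAlg K n P),
      DR a (ψ x) = ((x : Laurent K n)).coeff a := by
    intro a x
    rw [hDRval, AlgEquiv.symm_apply_apply]
  have hleib : ∀ a ∈ G, ∀ p q : MvPolynomial (Fin n) K,
      DR a (p * q) = η p * DR a q + η q * DR a p := by
    intro a ha p q
    rw [hDRval, map_mul]
    have h1 := val_mul_atom hptP (hatoms a ha) (ψ.symm p) (ψ.symm q)
    rw [h1, hηval, hηval, hDRval, hDRval]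
    ring
  have hvanish : ∀ (L : MvPolynomial (Fin n) K →ₗ[K] K),
      (∀ p q, L (p * q) = η p * L q + η q * L p) → (∀ i, L (X i) = 0) →
      ∀ p, L p = 0 := by
    intro L hL hX p
    induction p using MvPolynomial.induction_on with
    | C c =>
      have h1 : L 1 = 0 := by
        have h2 := hL 1 1
        have hη1 : η (1 : MvPolynomial (Fin n) K) = 1 := map_one η
        simp only [mul_one, hη1, one_mul] at h2
        have h3 : L 1 + 0 = L 1 + L 1 := by rw [add_zero]; exact h2
        exact (add_left_cancel h3).symm
      have h3 : (MvPolynomial.C c : MvPolynomial (Fin n) K) = c • (1 : MvPolynomial (Fin n) K) := by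
        rw [← MvPolynomial.algebraMap_eq, Algebra.algebraMap_eq_smul_one]
      rw [h3, map_smul, h1, smul_zero]
    | add p q ihp ihq => rw [map_add, ihp, ihq, add_zero]
    | mul_X p i ih => rw [hL p (X i), ih, hX i, mul_zero, mul_zero, add_zero]
  have hind : LinearIndependent K
      (fun a : ↥G => (fun i => DR (a : Fin n → ℤ) (X i) : Fin n → K)) := by
    rw [Fintype.linearIndependent_iff]
    intro t ht a'
    set L : MvPolynomial (Fin n) K →ₗ[K] K := ∑ a : ↥G, t a • DR (a : Fin n → ℤ) with hLdef
    have hLapp : ∀ p, L p = ∑ a : ↥G, t a * DR (a : Fin n → ℤ) p := by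
      intro p
      rw [hLdef, LinearMap.sum_apply]
      apply Finset.sum_congr rfl
      intro a _
      rw [LinearMap.smul_apply, smul_eq_mul]
    have hLleib : ∀ p q, L (p * q) = η p * L q + η q * L p := by
      intro p q
      rw [hLapp, hLapp, hLapp]
      rw [Finset.sum_congr rfl (fun a haa => by rw [hleib a a.2 p q])]
      rw [Finset.mul_sum, Finset.mul_sum, ← Finset.sum_add_distrib]
      apply Finset.sum_congr rfl
      intro a _
      ring
    have hLX : ∀ i, L (X i) = 0 := by
      intro i
      have h2 := congrFun ht i
      rw [Finset.sum_apply, Pi.zero_apply] at h2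
      rw [hLapp, ← h2]
      apply Finset.sum_congr rfl
      intro a _
      rw [Pi.smul_apply, smul_eq_mul]
    have hL0 := hvanish L hLleib hLX
    have haP : (a' : Fin n → ℤ) ∈ P := (hatoms a' a'.2).1
    have heval := hL0 (ψ (chiP K n P (a' : Fin n → ℤ) haP))
    rw [hLapp] at heval
    have hterm : ∀ a : ↥G, t a * DR (a : Fin n → ℤ) (ψ (chiP K n P (a' : Fin n → ℤ) haP))
        = if a = a' then t a else 0 := by
      intro a
      rw [hDRpsi, val_chiP, AddMonoidAlgebra.coeff_single, Finsupp.single_apply]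
      by_cases haa : a = a'
      · rw [if_pos (by rw [haa] : (a' : Fin n → ℤ) = (a : Fin n → ℤ)), mul_one, if_pos haa]
      · rw [if_neg (fun h => haa (Subtype.ext h.symm)), mul_zero, if_neg haa]
    rw [Finset.sum_congr rfl (fun a _ => hterm a)] at heval
    rw [Finset.sum_ite_eq' Finset.univ a' (fun a => t a)] at heval
    rw [if_pos (Finset.mem_univ a')] at heval
    exact heval
  have h1 := hind.fintype_card_le_finrank
  rw [Module.finrank_fin_fun K] at h1
  rwa [Fintype.card_coe] at h1

lemma freeOn_of_iso (hfg : P.FG)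
    (hgen : AddSubgroup.closure (P : Set (Fin n → ℤ)) = ⊤)
    (hptP : ∀ p ∈ P, -p ∈ P → p = 0)
    (ψ : ↥(monAlg K n P) ≃ₐ[K] MvPolynomial (Fin n) K) : FreeOn n P := by
  obtain ⟨G, hG0, hGcl, hmin⟩ := exists_minimal_genset hfg
  have hatoms := minimal_genset_atoms hptP G hG0 hGcl hmin
  exact freeOn_of_card_le hgen G hGcl (card_le_of_iso hptP ψ G hatoms)

end Eside

end ToricML

open ToricML in
theorem stmt_17 (K : Type) [Field K] [CharZero K] [IsAlgClosed K]
    (n : ℕ) (hn : 1 ≤ n) (P : AddSubmonoid (Fin n → ℤ))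
    (hfg : P.FG) (hgen : AddSubgroup.closure (P : Set (Fin n → ℤ)) = ⊤)
    (hpt : IsPointed n (coneOf n P)) :
    MLstarhAlg K n P = ⊥ ↔ Nonempty (↥(monAlg K n P) ≃ₐ[K] MvPolynomial (Fin n) K) := by
  constructor
  · intro h
    exact freeOn_iso (freeOn_of_ML h hfg hgen (pointedP hpt))
  · rintro ⟨ψ⟩
    exact ML_of_freeOn (freeOn_of_iso hfg hgen (pointedP hpt) ψ)
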